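/- (Theorem 1) Let U satisfy regularity condition R1 or R2, and let μ* be a minimizer of the convex problem min_{μ ∈ ℝ^m} 1 − τᵀμ + φ(μ) + λᵀ|μ|. If a classification rule h^U ∈ T(X,Y) satisfies h^U(y|x) ≥ Φ(x,y)ᵀμ* − φ(μ*) for all x ∈ X and y ∈ Y, then h^U is a 0-1 minimax risk classifier for U, i.e., sup_{p ∈ U} ℓ(h^U,p) = inf_{h ∈ T(X,Y)} sup_{p ∈ U} ℓ(h,p). In addition, the minimax risk equals inf_{h ∈ T(X,Y)} sup_{p ∈ U} ℓ(h,p) = 1 − τᵀμ* + φ(μ*) + λᵀ|μ*|. -/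

import Mathlib

open MeasureTheory

noncomputable section

/-- A (randomized) classification rule. -/
def IsRule {d K : ℕ} (Xs : Set (Fin d → ℝ)) (h : ↥Xs → Fin K → ℝ) : Prop :=
  (∀ x y, 0 ≤ h x y) ∧ (∀ x, ∑ y, h x y = 1) ∧ ∀ y, Measurable fun x => h x y

/-- Expected 0-1 loss. -/
def loss {d K : ℕ} {Xs : Set (Fin d → ℝ)} (h : ↥Xs → Fin K → ℝ)
    (p : Measure (↥Xs × Fin K)) : ℝ :=
  ∫ z, (1 - h z.1 z.2) ∂p

/-- Uncertainty set. -/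
def Unc {d K m : ℕ} {Xs : Set (Fin d → ℝ)} (Φ : ↥Xs × Fin K → Fin m → ℝ)
    (τ lam : Fin m → ℝ) : Set (Measure (↥Xs × Fin K)) :=
  {p | IsProbabilityMeasure p ∧ ∀ i, |(∫ z, Φ z i ∂p) - τ i| ≤ lam i}

/-- `φ(μ) = sup_{x ∈ X, ∅ ≠ C ⊆ Y} ((∑_{y∈C} Φ(x,y)ᵀμ) - 1)/|C|`. -/
def phi {d K m : ℕ} {Xs : Set (Fin d → ℝ)} (Φ : ↥Xs × Fin K → Fin m → ℝ)
    (μ : Fin m → ℝ) : ℝ :=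
  ⨆ (x : ↥Xs) (C : {C : Finset (Fin K) // C.Nonempty}),
    ((∑ y ∈ C.1, ∑ i, Φ (x, y) i * μ i) - 1) / (C.1.card : ℝ)

/-- Regularity condition R1. -/
def CondR1 {d K m : ℕ} (Xs : Set (Fin d → ℝ)) (Φ : ↥Xs × Fin K → Fin m → ℝ)
    (τ lam : Fin m → ℝ) : Prop :=
  Xs.Finite ∧ (Unc Φ τ lam).Nonempty

/-- Regularity condition R2. -/
def CondR2 {d K m : ℕ} (Xs : Set (Fin d → ℝ)) (Φ : ↥Xs × Fin K → Fin m → ℝ)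
    (τ lam : Fin m → ℝ) : Prop :=
  ∃ p ∈ Unc Φ τ lam,
    (∀ i, 0 < lam i → |(∫ z, Φ z i ∂p) - τ i| < lam i) ∧
    ((∀ i, 0 < lam i) ∨
      ∀ W : AffineSubspace ℝ (Fin m → ℝ), (W : Set (Fin m → ℝ)) ≠ Set.univ →
        ¬ (∀ᵐ z ∂p, Φ z ∈ (W : Set (Fin m → ℝ))))

/-- The minimax risk `inf_{h ∈ T(X,Y)} sup_{p ∈ U} ℓ(h,p)`. -/
def minimaxRisk {d K m : ℕ} (Xs : Set (Fin d → ℝ)) (Φ : ↥Xs × Fin K → Fin m → ℝ)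
    (τ lam : Fin m → ℝ) : ℝ :=
  sInf {r : ℝ | ∃ h : ↥Xs → Fin K → ℝ, IsRule Xs h ∧
    r = sSup ((fun p => loss h p) '' Unc Φ τ lam)}

/-! Weak duality: integrating `h ≥ Φᵀμ* − φ(μ*)` against `p ∈ U` and using `|E_p Φ − τ| ⪯ λ`
bounds every loss `ℓ(h, p)` by the objective value at `μ*`.

Conversely, the uniform distribution on `{x} × C` has moments equal to the average of `Φ(x, ·)`
over `C` and gives every rule loss at least `1 − 1/|C|`. Mixtures preserve such
(moments, loss bound) pairs, so for every point `(w, t)` of the convex hull of these atoms some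
distribution has moments `w` and gives every rule loss at least `1 − t`. Since
`φ(μ) = sup_atoms (⟨a.1, μ⟩ − a.2)`, a hyperplane separating the closed hull from
`{w | |w − τ| ⪯ λ} × [0, c]` is a `μ` of objective value at most `1 − c`; for `c` above
`1 − objective(μ*)` this is impossible, so the closed hull meets that set.
The regularity conditions let such a point of the closure be approximated by points of the hull
that still satisfy the moment constraints: under R1 the hull is closed, under R2.1 the moments of
`p` lie in the interior of the box, and under R2.2 they lie in the interior of the convex hull
of the range of `Φ` (otherwise a supporting hyperplane would carry `p`). -/

open Set MeasureTheory
open scoped ENNReal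

section ConvexClosure

variable {E F : Type*} [NormedAddCommGroup E] [NormedSpace ℝ E]
  [NormedAddCommGroup F] [NormedSpace ℝ F]

theorem mem_closure_of_openSegment_subset {s : Set E} {x y : E}
    (h : openSegment ℝ x y ⊆ closure s) : x ∈ closure s :=
  closure_minimal h isClosed_closure (segment_subset_closure_openSegment (left_mem_segment ℝ x y))

theorem Convex.mem_closure_inter_of_mem_interior {A B : Set E} (hA : Convex ℝ A)
    (hB : Convex ℝ B) {x y : E} (hxA : x ∈ closure A) (hxB : x ∈ B) (hyA : y ∈ closure A)
    (hyB : y ∈ interior B) : x ∈ closure (A ∩ B) := by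
  refine mem_closure_of_openSegment_subset (y := y) fun z hz => ?_
  have hzA : z ∈ closure A := hA.closure.openSegment_subset hxA hyA hz
  have hzB : z ∈ interior B :=
    hB.openSegment_closure_interior_subset_interior (subset_closure hxB) hyB hz
  have hsub : interior B ∩ A ⊆ A ∩ B := fun w hw => ⟨hw.2, interior_subset hw.1⟩
  exact closure_mono hsub (isOpen_interior.inter_closure ⟨hzB, hzA⟩)

theorem Convex.mem_closure_inter_prod_of_ball {A : Set (E × F)} (hA : Convex ℝ A) {K : Set E}
    (hK : Convex ℝ K) {x y : E × F} (hxA : x ∈ closure A) (hxK : x.1 ∈ K) (hyK : y.1 ∈ K)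
    {r : ℝ} (hr : 0 < r) (hball : ∀ v ∈ Metric.ball y.1 r, (v, y.2) ∈ A) :
    x ∈ closure (A ∩ K ×ˢ univ) := by
  refine mem_closure_of_openSegment_subset (y := y) ?_
  rintro _ ⟨a, b, ha, hb, hab, rfl⟩
  refine Metric.mem_closure_iff.2 fun ε hε => ?_
  obtain ⟨d, hdA, hxd⟩ := Metric.mem_closure_iff.1 hxA (min ε (b * r / a)) (by positivity)
  rw [dist_eq_norm] at hxd
  -- shifting the `y`-end by `a / b • (x.1 - d.1)` cancels the error of `d` in the first factor
  set v := y.1 + (a / b) • (x.1 - d.1)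
  have hv : v ∈ Metric.ball y.1 r := by
    have hx1 : ‖x.1 - d.1‖ < b * r / a :=
      (norm_fst_le (x - d)).trans_lt (hxd.trans_le (min_le_right _ _))
    rw [Metric.mem_ball, dist_eq_norm, add_sub_cancel_left, norm_smul,
      Real.norm_of_nonneg (by positivity)]
    calc a / b * ‖x.1 - d.1‖ < a / b * (b * r / a) := by gcongr
      _ = r := by field_simp
  have hq : a • d + b • (v, y.2) = a • x + b • y - a • ((0 : E), x.2 - d.2) := by
    have hbv : b • v = b • y.1 + a • (x.1 - d.1) := by
      rw [smul_add, smul_smul, mul_div_cancel₀ a hb.ne']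
    ext
    · simp only [Prod.fst_add, Prod.fst_sub, Prod.smul_fst, hbv]
      module
    · simp only [Prod.snd_add, Prod.snd_sub, Prod.smul_snd]
      module
  refine ⟨a • d + b • (v, y.2), ⟨hA hdA (hball v hv) ha.le hb.le hab, ?_, trivial⟩, ?_⟩
  · rw [hq]
    simpa using hK hxK hyK ha.le hb.le hab
  · rw [hq, dist_eq_norm, sub_sub_cancel, norm_smul, Real.norm_of_nonneg ha.le]
    calc a * ‖((0 : E), x.2 - d.2)‖ ≤ 1 * ‖x - d‖ := by
          gcongr
          · linarith
          · simp [Prod.norm_def]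
      _ < ε := by rw [one_mul]; exact hxd.trans_le (min_le_left _ _)

end ConvexClosure

theorem integral_mem_interior_convexHull_range {α E : Type*} [MeasurableSpace α]
    [NormedAddCommGroup E] [NormedSpace ℝ E] [FiniteDimensional ℝ E] {μ : Measure α}
    [IsProbabilityMeasure μ] {g : α → E} (hg : Integrable g μ)
    (hfull : ∀ W : AffineSubspace ℝ E, (W : Set E) ≠ univ → ¬ ∀ᵐ z ∂μ, g z ∈ (W : Set E)) :
    ∫ z, g z ∂μ ∈ interior (convexHull ℝ (range g)) := by
  have hspan : affineSpan ℝ (range g) = ⊤ := by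
    by_contra hne
    refine hfull _ ?_ (ae_of_all _ fun z => subset_affineSpan ℝ _ (mem_range_self z))
    rwa [Ne, AffineSubspace.coe_eq_univ_iff]
  have hint : (interior (convexHull ℝ (range g))).Nonempty :=
    (convex_convexHull ℝ _).interior_nonempty_iff_affineSpan_eq_top.2
      (by rwa [affineSpan_convexHull])
  by_contra hmean
  set w := ∫ z, g z ∂μ
  obtain ⟨f, u, hf0, hfC, hfw⟩ := geometric_hahn_banach_of_nonempty_interior
    (convex_convexHull ℝ _) (convex_singleton w) (disjoint_singleton_right.2 hmean) hint
    (singleton_nonempty w)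
  have hle : ∀ z, f (g z) ≤ f w := fun z =>
    (hfC _ (subset_convexHull ℝ _ (mem_range_self z))).trans (hfw w rfl)
  -- `f ∘ g ≤ f w = ∫ f ∘ g` forces `f ∘ g = f w` almost everywhere
  have hae : ∀ᵐ z ∂μ, f w - f (g z) = 0 := by
    refine (integral_eq_zero_iff_of_nonneg (fun z => sub_nonneg.2 (hle z))
      ((integrable_const _).sub (f.integrable_comp hg))).1 ?_
    rw [integral_sub (integrable_const _) (f.integrable_comp hg), f.integral_comp_comm hg]
    simp [w]
  refine hfull (AffineSubspace.mk' w (LinearMap.ker (f : E →ₗ[ℝ] ℝ))) ?_ ?_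
  · obtain ⟨v, hv⟩ : ∃ v, f v ≠ 0 := by
      by_contra! h
      exact hf0 (ContinuousLinearMap.ext h)
    intro huniv
    have : v + w ∈ (AffineSubspace.mk' w (LinearMap.ker (f : E →ₗ[ℝ] ℝ)) : Set E) :=
      huniv ▸ mem_univ _
    exact hv (by simpa [AffineSubspace.mem_mk'] using this)
  · filter_upwards [hae] with z hz
    have hzw : f (g z) = f w := by linarith
    simp [AffineSubspace.mem_mk', hzw]

theorem integral_smul_add_smul_measure {α : Type*} [MeasurableSpace α] {p q : Measure α}
    {f : α → ℝ} (hp : Integrable f p) (hq : Integrable f q) {s t : ℝ} (hs : 0 ≤ s) (ht : 0 ≤ t) :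
    ∫ z, f z ∂(ENNReal.ofReal s • p + ENNReal.ofReal t • q) =
      s * ∫ z, f z ∂p + t * ∫ z, f z ∂q := by
  rw [integral_add_measure (hp.smul_measure ENNReal.ofReal_ne_top)
      (hq.smul_measure ENNReal.ofReal_ne_top), integral_smul_measure, integral_smul_measure,
    ENNReal.toReal_ofReal hs, ENNReal.toReal_ofReal ht, smul_eq_mul, smul_eq_mul]

theorem integral_inv_card_smul_sum_dirac {α ι E : Type*} [MeasurableSpace α]
    [MeasurableSingletonClass α] [NormedAddCommGroup E] [NormedSpace ℝ E] [CompleteSpace E]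
    (s : Finset ι) (x : ι → α) (f : α → E) :
    ∫ z, f z ∂((s.card : ℝ≥0∞)⁻¹ • ∑ i ∈ s, Measure.dirac (x i)) =
      (s.card : ℝ)⁻¹ • ∑ i ∈ s, f (x i) := by
  rw [integral_smul_measure, integral_finsetSum_measure fun i _ => integrable_dirac (by simp)]
  simp only [integral_dirac, ENNReal.toReal_inv, ENNReal.toReal_natCast]

namespace IsRule

variable {d K : ℕ} {Xs : Set (Fin d → ℝ)} {h : ↥Xs → Fin K → ℝ}

theorem le_one (hh : IsRule Xs h) (x : ↥Xs) (y : Fin K) : h x y ≤ 1 :=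
  (Finset.single_le_sum (fun y' _ => hh.1 x y') (Finset.mem_univ y)).trans_eq (hh.2.1 x)

theorem measurable_uncurry (hh : IsRule Xs h) : Measurable fun z : ↥Xs × Fin K => h z.1 z.2 :=
  measurable_from_prod_countable_left hh.2.2

theorem integrable (hh : IsRule Xs h) (p : Measure (↥Xs × Fin K)) [IsFiniteMeasure p] :
    Integrable (fun z => h z.1 z.2) p :=
  .of_bound hh.measurable_uncurry.aestronglyMeasurable 1 (ae_of_all _ fun z => by
    rw [Real.norm_of_nonneg (hh.1 _ _)]
    exact hh.le_one _ _)

theorem loss_eq (hh : IsRule Xs h) (p : Measure (↥Xs × Fin K)) [IsProbabilityMeasure p] :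
    loss h p = 1 - ∫ z, h z.1 z.2 ∂p := by
  rw [loss, integral_sub (integrable_const 1) (hh.integrable p)]
  simp

theorem loss_le_one (hh : IsRule Xs h) (p : Measure (↥Xs × Fin K)) [IsProbabilityMeasure p] :
    loss h p ≤ 1 := by
  have : 0 ≤ ∫ z, h z.1 z.2 ∂p := integral_nonneg fun z => hh.1 z.1 z.2
  rw [hh.loss_eq]
  linarith

end IsRule

namespace MRC

section MomentBox

variable {ι : Type*}

def momentBox (τ lam : ι → ℝ) : Set (ι → ℝ) := {w | ∀ i, |w i - τ i| ≤ lam i}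

variable {τ lam : ι → ℝ}

theorem momentBox_eq_pi (τ lam : ι → ℝ) :
    momentBox τ lam = univ.pi fun i => Icc (τ i - lam i) (τ i + lam i) := by
  ext w
  simp only [momentBox, mem_univ_pi, mem_Icc, abs_sub_le_iff]
  refine forall_congr' fun i => ?_
  constructor <;> rintro ⟨h₁, h₂⟩ <;> constructor <;> linarith

theorem isCompact_momentBox (τ lam : ι → ℝ) : IsCompact (momentBox τ lam) := by
  rw [momentBox_eq_pi]
  exact isCompact_univ_pi fun i => isCompact_Icc

theorem convex_momentBox (τ lam : ι → ℝ) : Convex ℝ (momentBox τ lam) := by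
  rw [momentBox_eq_pi]
  exact convex_pi fun i _ => convex_Icc _ _

variable [Fintype ι]

theorem mem_interior_momentBox {w : ι → ℝ} (hw : ∀ i, |w i - τ i| < lam i) :
    w ∈ interior (momentBox τ lam) := by
  rw [momentBox_eq_pi, interior_pi_set finite_univ]
  intro i _
  simp only [interior_Icc]
  have := abs_sub_lt_iff.1 (hw i)
  constructor <;> linarith

theorem sum_mul_le_of_mem_momentBox {w : ι → ℝ} (hw : w ∈ momentBox τ lam) (μ : ι → ℝ) :
    ∑ i, τ i * μ i - ∑ i, lam i * |μ i| ≤ ∑ i, w i * μ i := by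
  rw [← Finset.sum_sub_distrib]
  gcongr with i
  have hdev : |(w i - τ i) * μ i| ≤ lam i * |μ i| := by
    rw [abs_mul]
    exact mul_le_mul_of_nonneg_right (hw i) (abs_nonneg _)
  linarith [neg_abs_le ((w i - τ i) * μ i)]

theorem exists_mem_momentBox_sum_mul_eq (hne : (momentBox τ lam).Nonempty) (μ : ι → ℝ) :
    ∃ w ∈ momentBox τ lam, ∑ i, w i * μ i = ∑ i, τ i * μ i - ∑ i, lam i * |μ i| := by
  obtain ⟨w₀, hw₀⟩ := hne
  have hlam : ∀ i, 0 ≤ lam i := fun i => (abs_nonneg _).trans (hw₀ i)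
  refine ⟨fun i => if 0 ≤ μ i then τ i - lam i else τ i + lam i, fun i => ?_, ?_⟩
  · by_cases hμ : 0 ≤ μ i <;> simp [hμ, abs_of_nonneg (hlam i)]
  · rw [← Finset.sum_sub_distrib]
    refine Finset.sum_congr rfl fun i _ => ?_
    by_cases hμ : 0 ≤ μ i
    · simp only [hμ, if_true, abs_of_nonneg hμ]; ring
    · simp only [hμ, if_false, abs_of_neg (not_le.1 hμ)]; ring

theorem exists_dual_of_disjoint {S : Set ((ι → ℝ) × ℝ)} (hS : Convex ℝ S) (hSc : IsClosed S)
    {w₀ : ι → ℝ} (hw₀ : w₀ ∈ momentBox τ lam) (hw₀S : (w₀, 1) ∈ S) {c : ℝ} (hc : 0 ≤ c)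
    (hdisj : Disjoint (momentBox τ lam ×ˢ Icc 0 c) S) :
    ∃ μ : ι → ℝ, ∀ a ∈ S, ∑ i, a.1 i * μ i - a.2 ≤ ∑ i, τ i * μ i - ∑ i, lam i * |μ i| - c := by
  classical
  obtain ⟨f, u, v, hfu, huv, hfv⟩ := geometric_hahn_banach_compact_closed
    ((convex_momentBox τ lam).prod (convex_Icc 0 c))
    ((isCompact_momentBox τ lam).prod isCompact_Icc) hS hSc hdisj
  set sl := f (0, 1)
  have hf : ∀ w r, f (w, r) = ∑ i, w i * f (Pi.single i 1, 0) + r * sl := by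
    intro w r
    have hwr : ((w, r) : (ι → ℝ) × ℝ) = ∑ i, w i • (Pi.single i 1, 0) + r • (0, 1) := by
      ext <;> simp [Prod.fst_sum, Prod.snd_sum, Finset.sum_apply, Pi.single_apply]
    simp only [hwr, map_add, map_sum, map_smul, smul_eq_mul, sl]
  -- the point `(w₀, 1)` of `S` lies directly above the point `(w₀, 0)` of the box side
  have hsl : 0 < sl := by
    have h₀ := hfu (w₀, 0) ⟨hw₀, left_mem_Icc.2 hc⟩
    have h₁ := hfv (w₀, 1) hw₀S
    rw [hf] at h₀ h₁
    linarith
  set μ : ι → ℝ := fun i => -f (Pi.single i 1, 0) / sl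
  have hfμ : ∀ w r, f (w, r) = sl * (r - ∑ i, w i * μ i) := by
    intro w r
    have hterm : ∀ i, sl * (w i * μ i) = -(w i * f (Pi.single i 1, 0)) := fun i => by
      simp only [μ]
      field_simp
    rw [hf, mul_sub, Finset.mul_sum]
    simp only [hterm, Finset.sum_neg_distrib]
    ring
  obtain ⟨w', hw', hw'μ⟩ := exists_mem_momentBox_sum_mul_eq ⟨w₀, hw₀⟩ μ
  refine ⟨μ, fun a ha => ?_⟩
  have h₁ := hfu (w', c) ⟨hw', right_mem_Icc.2 hc⟩
  have h₂ := hfv a ha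
  rw [hfμ] at h₁
  rw [← Prod.mk.eta (p := a), hfμ] at h₂
  have := lt_of_mul_lt_mul_left (h₁.trans (huv.trans h₂)) hsl.le
  linarith

end MomentBox

variable {d K m : ℕ} {Xs : Set (Fin d → ℝ)} {Φ : ↥Xs × Fin K → Fin m → ℝ} {τ lam : Fin m → ℝ}

def objective (Φ : ↥Xs × Fin K → Fin m → ℝ) (τ lam μ : Fin m → ℝ) : ℝ :=
  1 - (∑ i, τ i * μ i) + phi Φ μ + ∑ i, lam i * |μ i|

def moments (Φ : ↥Xs × Fin K → Fin m → ℝ) (p : Measure (↥Xs × Fin K)) : Fin m → ℝ :=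
  fun i => ∫ z, Φ z i ∂p

theorem integrable_feature {B : ℝ} (hΦmeas : ∀ i, Measurable fun z => Φ z i)
    (hΦbdd : ∀ z i, |Φ z i| ≤ B) (p : Measure (↥Xs × Fin K)) [IsFiniteMeasure p] (i : Fin m) :
    Integrable (fun z => Φ z i) p :=
  .of_bound (hΦmeas i).aestronglyMeasurable B (ae_of_all _ fun z => hΦbdd z i)

theorem integral_eq_moments {B : ℝ} (hΦmeas : ∀ i, Measurable fun z => Φ z i)
    (hΦbdd : ∀ z i, |Φ z i| ≤ B) (p : Measure (↥Xs × Fin K)) [IsFiniteMeasure p] :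
    ∫ z, Φ z ∂p = moments Φ p :=
  funext (eval_integral (integrable_feature hΦmeas hΦbdd p))

theorem loss_le_of_sub_le {B : ℝ} (hΦmeas : ∀ i, Measurable fun z => Φ z i)
    (hΦbdd : ∀ z i, |Φ z i| ≤ B) {p : Measure (↥Xs × Fin K)} (hp : p ∈ Unc Φ τ lam)
    {h : ↥Xs → Fin K → ℝ} (hh : IsRule Xs h) {μ : Fin m → ℝ} {c : ℝ}
    (hge : ∀ x y, ∑ i, Φ (x, y) i * μ i - c ≤ h x y) :
    loss h p ≤ 1 - ∑ i, τ i * μ i + c + ∑ i, lam i * |μ i| := by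
  have := hp.1
  have hint : ∀ i ∈ Finset.univ, Integrable (fun z => Φ z i * μ i) p :=
    fun i _ => (integrable_feature hΦmeas hΦbdd p i).mul_const _
  have hmean : ∫ z, (∑ i, Φ z i * μ i - c) ∂p = ∑ i, moments Φ p i * μ i - c := by
    rw [integral_sub (integrable_finsetSum _ hint) (integrable_const c),
      integral_finsetSum _ hint]
    simp [moments, integral_mul_const]
  have hmono : ∫ z, (∑ i, Φ z i * μ i - c) ∂p ≤ ∫ z, h z.1 z.2 ∂p :=
    integral_mono ((integrable_finsetSum _ hint).sub (integrable_const c)) (hh.integrable p)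
      fun z => hge z.1 z.2
  have hbox : ∑ i, τ i * μ i - ∑ i, lam i * |μ i| ≤ ∑ i, moments Φ p i * μ i :=
    sum_mul_le_of_mem_momentBox hp.2 μ
  rw [hh.loss_eq]
  linarith

def atom (Φ : ↥Xs × Fin K → Fin m → ℝ) (x : ↥Xs) (C : Finset (Fin K)) : (Fin m → ℝ) × ℝ :=
  ((C.card : ℝ)⁻¹ • ∑ y ∈ C, Φ (x, y), (C.card : ℝ)⁻¹)

def atoms (Φ : ↥Xs × Fin K → Fin m → ℝ) : Set ((Fin m → ℝ) × ℝ) :=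
  {a | ∃ x C, C.Nonempty ∧ atom Φ x C = a}

theorem mk_one_mem_atoms (Φ : ↥Xs × Fin K → Fin m → ℝ) (z : ↥Xs × Fin K) :
    (Φ z, 1) ∈ atoms Φ :=
  ⟨z.1, {z.2}, Finset.singleton_nonempty _, by simp [atom]⟩

theorem phi_le_of_forall_atoms [Nonempty ↥Xs] [Nonempty (Fin K)] {μ : Fin m → ℝ} {r : ℝ}
    (h : ∀ a ∈ atoms Φ, ∑ i, a.1 i * μ i - a.2 ≤ r) : phi Φ μ ≤ r := by
  obtain ⟨y⟩ := ‹Nonempty (Fin K)›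
  have : Nonempty {C : Finset (Fin K) // C.Nonempty} := ⟨⟨{y}, Finset.singleton_nonempty y⟩⟩
  refine ciSup_le fun x => ciSup_le fun C => ?_
  refine le_of_eq_of_le ?_ (h _ ⟨x, C.1, C.2, rfl⟩)
  simp only [atom, Pi.smul_apply, Finset.sum_apply, smul_eq_mul, mul_assoc, ← Finset.mul_sum,
    Finset.sum_mul]
  rw [Finset.sum_comm, div_eq_inv_mul, mul_sub, mul_one]

theorem objective_zero_le_one [Nonempty ↥Xs] [Nonempty (Fin K)] : objective Φ τ lam 0 ≤ 1 := by
  have hphi : phi Φ 0 ≤ 0 := phi_le_of_forall_atoms fun a ⟨x, C, _, ha⟩ => by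
    subst ha
    simp [atom]
  simpa [objective] using hphi

def realizable (Φ : ↥Xs × Fin K → Fin m → ℝ) : Set ((Fin m → ℝ) × ℝ) :=
  {a | ∃ p : Measure (↥Xs × Fin K), IsProbabilityMeasure p ∧ moments Φ p = a.1 ∧
    ∀ h, IsRule Xs h → 1 - a.2 ≤ loss h p}

theorem atom_mem_realizable (x : ↥Xs) {C : Finset (Fin K)} (hC : C.Nonempty) :
    atom Φ x C ∈ realizable Φ := by
  set p : Measure (↥Xs × Fin K) := (C.card : ℝ≥0∞)⁻¹ • ∑ y ∈ C, Measure.dirac (x, y)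
  have hcard : (C.card : ℝ≥0∞) ≠ 0 := by simpa using hC.ne_empty
  have hp : IsProbabilityMeasure p := ⟨by simp [p, ENNReal.inv_mul_cancel hcard]⟩
  refine ⟨p, hp, ?_, fun h hh => ?_⟩
  · ext i
    simp only [moments, p]
    rw [integral_inv_card_smul_sum_dirac]
    simp [atom, Finset.sum_apply]
  · have hsum : ∑ y ∈ C, h x y ≤ 1 :=
      (Finset.sum_le_sum_of_subset_of_nonneg (Finset.subset_univ C) fun y _ _ => hh.1 x y).trans
        (hh.2.1 x).le
    rw [hh.loss_eq, integral_inv_card_smul_sum_dirac, smul_eq_mul]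
    simp only [atom]
    gcongr
    exact mul_le_of_le_one_right (by positivity) hsum

theorem convex_realizable {B : ℝ} (hΦmeas : ∀ i, Measurable fun z => Φ z i)
    (hΦbdd : ∀ z i, |Φ z i| ≤ B) : Convex ℝ (realizable Φ) := by
  rintro a ⟨p, hp, hpm, hpl⟩ b ⟨q, hq, hqm, hql⟩ s t hs ht hst
  refine ⟨ENNReal.ofReal s • p + ENNReal.ofReal t • q, ⟨?_⟩, ?_, fun h hh => ?_⟩
  · simp [← ENNReal.ofReal_add hs ht, hst]
  · ext i
    simp [moments, integral_smul_add_smul_measure (integrable_feature hΦmeas hΦbdd p i)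
      (integrable_feature hΦmeas hΦbdd q i) hs ht, ← hpm, ← hqm]
  · have hint : ∀ r : Measure (↥Xs × Fin K), IsProbabilityMeasure r →
        Integrable (fun z => 1 - h z.1 z.2) r := fun r _ =>
      (integrable_const 1).sub (hh.integrable r)
    rw [loss, integral_smul_add_smul_measure (hint p hp) (hint q hq) hs ht, ← loss, ← loss]
    calc 1 - (s • a + t • b).2 = s * (1 - a.2) + t * (1 - b.2) := by
          simp only [Prod.snd_add, Prod.smul_snd, smul_eq_mul]
          linear_combination -hst
      _ ≤ s * loss h p + t * loss h q := by
          gcongr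
          exacts [hpl h hh, hql h hh]

theorem convexHull_atoms_subset_realizable {B : ℝ} (hΦmeas : ∀ i, Measurable fun z => Φ z i)
    (hΦbdd : ∀ z i, |Φ z i| ≤ B) : convexHull ℝ (atoms Φ) ⊆ realizable Φ :=
  convexHull_min (by rintro _ ⟨x, C, hC, rfl⟩; exact atom_mem_realizable x hC)
    (convex_realizable hΦmeas hΦbdd)

theorem mk_moments_one_mem_closure_convexHull_atoms {B : ℝ}
    (hΦmeas : ∀ i, Measurable fun z => Φ z i) (hΦbdd : ∀ z i, |Φ z i| ≤ B)
    (p : Measure (↥Xs × Fin K)) [IsProbabilityMeasure p] :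
    (moments Φ p, 1) ∈ closure (convexHull ℝ (atoms Φ)) := by
  have hint : Integrable Φ p := Integrable.of_eval (integrable_feature hΦmeas hΦbdd p)
  have hmean : ∫ z, (Φ z, (1 : ℝ)) ∂p = (moments Φ p, 1) := by
    rw [integral_pair hint (integrable_const 1), integral_eq_moments hΦmeas hΦbdd]
    simp
  rw [← hmean]
  exact (convex_convexHull ℝ _).closure.integral_mem isClosed_closure
    (ae_of_all _ fun z => subset_closure (subset_convexHull ℝ _ (mk_one_mem_atoms Φ z)))
    (hint.prodMk (integrable_const 1))

theorem mk_one_mem_convexHull_atoms {v : Fin m → ℝ} (hv : v ∈ convexHull ℝ (range Φ)) :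
    (v, 1) ∈ convexHull ℝ (atoms Φ) := by
  have hprod : (v, (1 : ℝ)) ∈ convexHull ℝ (range Φ ×ˢ {1}) := by
    rw [convexHull_prod, convexHull_singleton]
    exact ⟨hv, rfl⟩
  refine convexHull_mono ?_ hprod
  rintro ⟨_, r⟩ ⟨⟨z, rfl⟩, hr⟩
  obtain rfl : r = 1 := hr
  exact mk_one_mem_atoms Φ z

theorem nonempty_Unc_of_regular (hreg : CondR1 Xs Φ τ lam ∨ CondR2 Xs Φ τ lam) :
    (Unc Φ τ lam).Nonempty := by
  rcases hreg with ⟨-, hne⟩ | ⟨p, hp, -⟩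
  exacts [hne, ⟨p, hp⟩]

theorem finite_atoms (hXs : Xs.Finite) : (atoms Φ).Finite := by
  have := hXs.to_subtype
  refine (finite_range fun q : ↥Xs × Finset (Fin K) => atom Φ q.1 q.2).subset ?_
  rintro _ ⟨x, C, -, rfl⟩
  exact ⟨(x, C), rfl⟩

theorem mem_closure_convexHull_atoms_inter {B : ℝ} (hΦmeas : ∀ i, Measurable fun z => Φ z i)
    (hΦbdd : ∀ z i, |Φ z i| ≤ B) (hreg : CondR1 Xs Φ τ lam ∨ CondR2 Xs Φ τ lam)
    {a : (Fin m → ℝ) × ℝ} (ha : a ∈ closure (convexHull ℝ (atoms Φ)))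
    (hbox : a.1 ∈ momentBox τ lam) :
    a ∈ closure (convexHull ℝ (atoms Φ) ∩ momentBox τ lam ×ˢ univ) := by
  rcases hreg with ⟨hfin, -⟩ | ⟨p, hp, hstrict, hpos | hfull⟩
  · rw [((finite_atoms hfin).isClosed_convexHull ℝ).closure_eq] at ha
    exact subset_closure ⟨ha, hbox, trivial⟩
  · have := hp.1
    have hint : (moments Φ p, (1 : ℝ)) ∈ interior (momentBox τ lam ×ˢ (univ : Set ℝ)) := by
      rw [interior_prod_eq, interior_univ]
      exact ⟨mem_interior_momentBox fun i => hstrict i (hpos i), mem_univ _⟩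
    have hBconv : Convex ℝ (momentBox τ lam ×ˢ (univ : Set ℝ)) :=
      (convex_momentBox τ lam).prod convex_univ
    exact (convex_convexHull ℝ _).mem_closure_inter_of_mem_interior hBconv ha
      (mem_prod.2 ⟨hbox, mem_univ _⟩)
      (mk_moments_one_mem_closure_convexHull_atoms hΦmeas hΦbdd p) hint
  · have := hp.1
    have hint : Integrable Φ p := Integrable.of_eval (integrable_feature hΦmeas hΦbdd p)
    have hmean := integral_mem_interior_convexHull_range hint hfull
    rw [integral_eq_moments hΦmeas hΦbdd] at hmean
    obtain ⟨r, hr, hball⟩ := Metric.isOpen_iff.1 isOpen_interior _ hmean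
    exact (convex_convexHull ℝ _).mem_closure_inter_prod_of_ball (y := (moments Φ p, 1))
      (convex_momentBox τ lam) ha hbox hp.2 hr
      fun v hv => mk_one_mem_convexHull_atoms (interior_subset (hball hv))

theorem exists_mem_Unc_objective_sub_le_loss {B : ℝ} (hΦmeas : ∀ i, Measurable fun z => Φ z i)
    (hΦbdd : ∀ z i, |Φ z i| ≤ B) (hreg : CondR1 Xs Φ τ lam ∨ CondR2 Xs Φ τ lam)
    {μs : Fin m → ℝ} (hμs : ∀ μ, objective Φ τ lam μs ≤ objective Φ τ lam μ)
    {h : ↥Xs → Fin K → ℝ} (hh : IsRule Xs h) {ε : ℝ} (hε : 0 < ε) :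
    ∃ p ∈ Unc Φ τ lam, objective Φ τ lam μs - ε ≤ loss h p := by
  obtain ⟨p₀, hp₀⟩ := nonempty_Unc_of_regular hreg
  have := hp₀.1
  obtain ⟨x₀, y₀⟩ := nonempty_of_isProbabilityMeasure p₀
  have : Nonempty ↥Xs := ⟨x₀⟩
  have : Nonempty (Fin K) := ⟨y₀⟩
  set c := 1 - objective Φ τ lam μs + ε / 2 with hc_def
  have hc : 0 ≤ c := by
    linarith [hμs 0, objective_zero_le_one (Φ := Φ) (τ := τ) (lam := lam)]
  by_cases hdisj : Disjoint (momentBox τ lam ×ˢ Icc 0 c) (closure (convexHull ℝ (atoms Φ)))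
  · obtain ⟨μ, hμ⟩ := exists_dual_of_disjoint (convex_convexHull ℝ _).closure isClosed_closure
      hp₀.2 (mk_moments_one_mem_closure_convexHull_atoms hΦmeas hΦbdd p₀) hc hdisj
    have hphi := phi_le_of_forall_atoms fun a ha =>
      hμ a (subset_closure (subset_convexHull ℝ _ ha))
    have hobj : objective Φ τ lam μ = 1 - ∑ i, τ i * μ i + phi Φ μ + ∑ i, lam i * |μ i| := rfl
    linarith [hμs μ]
  · obtain ⟨a, ⟨haw, hat⟩, haS⟩ := not_disjoint_iff.1 hdisj
    obtain ⟨b, ⟨hbH, hbw, -⟩, hab⟩ := Metric.mem_closure_iff.1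
      (mem_closure_convexHull_atoms_inter hΦmeas hΦbdd hreg haS haw) (ε / 2) (half_pos hε)
    obtain ⟨p, hp, hpm, hpl⟩ := convexHull_atoms_subset_realizable hΦmeas hΦbdd hbH
    have hpU : moments Φ p ∈ momentBox τ lam := hpm ▸ hbw
    refine ⟨p, ⟨hp, hpU⟩, ?_⟩
    have hb : |a.2 - b.2| < ε / 2 :=
      (le_max_right _ _).trans_lt ((Prod.dist_eq (x := a) (y := b)) ▸ hab)
    linarith [hpl h hh, hat.2, (abs_lt.1 hb).1]

theorem objective_le_sSup_loss {B : ℝ} (hΦmeas : ∀ i, Measurable fun z => Φ z i)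
    (hΦbdd : ∀ z i, |Φ z i| ≤ B) (hreg : CondR1 Xs Φ τ lam ∨ CondR2 Xs Φ τ lam)
    {μs : Fin m → ℝ} (hμs : ∀ μ, objective Φ τ lam μs ≤ objective Φ τ lam μ)
    {h : ↥Xs → Fin K → ℝ} (hh : IsRule Xs h) :
    objective Φ τ lam μs ≤ sSup ((fun p => loss h p) '' Unc Φ τ lam) := by
  have hbdd : BddAbove ((fun p => loss h p) '' Unc Φ τ lam) := by
    refine ⟨1, ?_⟩
    rintro _ ⟨p, hp, rfl⟩
    have := hp.1
    exact hh.loss_le_one p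
  refine le_of_forall_pos_le_add fun ε hε => ?_
  obtain ⟨p, hp, hle⟩ := exists_mem_Unc_objective_sub_le_loss hΦmeas hΦbdd hreg hμs hh hε
  linarith [le_csSup hbdd (mem_image_of_mem _ hp)]

end MRC

theorem stmt_2_general {d K m : ℕ} (Xs : Set (Fin d → ℝ))
    (Φ : ↥Xs × Fin K → Fin m → ℝ) (hΦmeas : ∀ i, Measurable fun z => Φ z i)
    (B : ℝ) (hΦbdd : ∀ z i, |Φ z i| ≤ B)
    (τ lam : Fin m → ℝ)
    (hreg : CondR1 Xs Φ τ lam ∨ CondR2 Xs Φ τ lam)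
    (μs : Fin m → ℝ)
    (hμs : ∀ μ : Fin m → ℝ,
      1 - (∑ i, τ i * μs i) + phi Φ μs + ∑ i, lam i * |μs i| ≤
      1 - (∑ i, τ i * μ i) + phi Φ μ + ∑ i, lam i * |μ i|)
    (h : ↥Xs → Fin K → ℝ) (hrule : IsRule Xs h)
    (hge : ∀ (x : ↥Xs) (y : Fin K), (∑ i, Φ (x, y) i * μs i) - phi Φ μs ≤ h x y) :
    sSup ((fun p => loss h p) '' Unc Φ τ lam) = minimaxRisk Xs Φ τ lam ∧
    minimaxRisk Xs Φ τ lam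
      = 1 - (∑ i, τ i * μs i) + phi Φ μs + ∑ i, lam i * |μs i| := by
  have hlower : ∀ h', IsRule Xs h' →
      MRC.objective Φ τ lam μs ≤ sSup ((fun p => loss h' p) '' Unc Φ τ lam) :=
    fun h' hh' => MRC.objective_le_sSup_loss hΦmeas hΦbdd hreg hμs hh'
  have hsup : sSup ((fun p => loss h p) '' Unc Φ τ lam) = MRC.objective Φ τ lam μs := by
    obtain ⟨p₀, hp₀⟩ := MRC.nonempty_Unc_of_regular hreg
    refine le_antisymm (csSup_le ⟨_, p₀, hp₀, rfl⟩ ?_) (hlower h hrule)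
    rintro _ ⟨p, hp, rfl⟩
    exact MRC.loss_le_of_sub_le hΦmeas hΦbdd hp hrule hge
  have hrisk : minimaxRisk Xs Φ τ lam = MRC.objective Φ τ lam μs :=
    IsLeast.csInf_eq ⟨⟨h, hrule, hsup.symm⟩, by rintro _ ⟨h', hh', rfl⟩; exact hlower h' hh'⟩
  exact ⟨hsup.trans hrisk.symm, hrisk⟩

/-- Theorem 1: a rule dominating `Φᵀμ* − φ(μ*)` for a minimizer `μ*` of the MRC learning
problem is a 0-1 minimax risk classifier, and the minimax risk equals the optimal value. -/
theorem stmt_2 {d K m : ℕ} (hK : 0 < K)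
    (Xs : Set (Fin d → ℝ)) (hXs : MeasurableSet Xs)
    (Φ : ↥Xs × Fin K → Fin m → ℝ) (hΦmeas : ∀ i, Measurable fun z => Φ z i)
    (B : ℝ) (hΦbdd : ∀ z i, |Φ z i| ≤ B)
    (τ lam : Fin m → ℝ)
    (hreg : CondR1 Xs Φ τ lam ∨ CondR2 Xs Φ τ lam)
    (μs : Fin m → ℝ)
    (hμs : ∀ μ : Fin m → ℝ,
      1 - (∑ i, τ i * μs i) + phi Φ μs + ∑ i, lam i * |μs i| ≤
      1 - (∑ i, τ i * μ i) + phi Φ μ + ∑ i, lam i * |μ i|)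
    (h : ↥Xs → Fin K → ℝ) (hrule : IsRule Xs h)
    (hge : ∀ (x : ↥Xs) (y : Fin K), (∑ i, Φ (x, y) i * μs i) - phi Φ μs ≤ h x y) :
    sSup ((fun p => loss h p) '' Unc Φ τ lam) = minimaxRisk Xs Φ τ lam ∧
    minimaxRisk Xs Φ τ lam
      = 1 - (∑ i, τ i * μs i) + phi Φ μs + ∑ i, lam i * |μs i| :=
  stmt_2_general Xs Φ hΦmeas B hΦbdd τ lam hreg μs hμs h hrule hge

end
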